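/- arXiv:2002.06855 — 3 statements merged into one kernel-verified Lean document; each statement's English description precedes it below -/
import Mathlib

section
/- Let Y be a real normed vector space and L : Y → ℝ a three times continuously (Fréchet) differentiable functional. Then for any y₁, y₂ ∈ Y, setting e := y₁ − y₂, one has the box-rule representation L(y₁) − L(y₂) = (1/2)·(L'(y₂)(e) + L'(y₁)(e)) + ℛ, where the remainder is ℛ = (1/2) ∫₀¹ L'''(y₂ + s·e)(e,e,e)·s·(s−1) ds. -/
/-!
Along the segment `g s = L (y₂ + s • e)` the integrand is `g''' s * s * (s - 1)`. Integrating by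
parts twice against the kernel `s (s - 1)`, which vanishes at both ends and has second derivative
`2`, turns `∫ g''' s (s - 1)` into `-(g' 0 + g' 1) + 2 (g 1 - g 0)`: the error term of the
trapezoidal rule.
-/

open intervalIntegral MeasureTheory
open scoped Interval

theorem sub_eq_trapezoid_add_integral_smul_third_deriv {E : Type*} [NormedAddCommGroup E]
    [NormedSpace ℝ E] [CompleteSpace E] {g g₁ g₂ g₃ : ℝ → E} {a b : ℝ}
    (hg : ∀ s ∈ [[a, b]], HasDerivAt g (g₁ s) s)
    (hg₁ : ∀ s ∈ [[a, b]], HasDerivAt g₁ (g₂ s) s)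
    (hg₂ : ∀ s ∈ [[a, b]], HasDerivAt g₂ (g₃ s) s)
    (hg₃ : IntervalIntegrable g₃ volume a b) :
    g b - g a = ((b - a) / 2) • (g₁ a + g₁ b) +
      (1 / 2 : ℝ) • ∫ s in a..b, ((s - a) * (s - b)) • g₃ s := by
  have hint₁ : IntervalIntegrable g₁ volume a b :=
    ContinuousOn.intervalIntegrable fun s hs ↦ (hg₁ s hs).continuousAt.continuousWithinAt
  have hint₂ : IntervalIntegrable g₂ volume a b :=
    ContinuousOn.intervalIntegrable fun s hs ↦ (hg₂ s hs).continuousAt.continuousWithinAt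
  have hu (s : ℝ) : HasDerivAt (fun s ↦ (s - a) * (s - b)) (2 * s - a - b) s :=
    (((hasDerivAt_id' s).sub_const a).mul ((hasDerivAt_id' s).sub_const b)).congr_deriv (by ring)
  have hu' (s : ℝ) : HasDerivAt (fun s ↦ 2 * s - a - b) 2 s := by
    simpa using (((hasDerivAt_id s).const_mul 2).sub_const a).sub_const b
  have ibp₁ : ∫ s in a..b, ((s - a) * (s - b)) • g₃ s
      = -∫ s in a..b, (2 * s - a - b) • g₂ s := by
    rw [integral_smul_deriv_eq_deriv_smul (fun s _ ↦ hu s) hg₂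
      (Continuous.intervalIntegrable (by fun_prop) _ _) hg₃]
    simp
  have ibp₂ : ∫ s in a..b, (2 * s - a - b) • g₂ s
      = (b - a) • (g₁ b + g₁ a) - (2 : ℝ) • (g b - g a) := by
    rw [integral_smul_deriv_eq_deriv_smul (fun s _ ↦ hu' s) hg₁ intervalIntegrable_const hint₂,
      intervalIntegral.integral_smul, integral_eq_sub_of_hasDerivAt hg hint₁]
    module
  rw [ibp₁, ibp₂]
  module

section Line

variable {E F : Type*} [NormedAddCommGroup E] [NormedSpace ℝ E] [NormedAddCommGroup F]
  [NormedSpace ℝ F] {f : E → F} {n : WithTop ℕ∞} {k : ℕ}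

theorem ContDiff.hasDerivAt_iteratedFDeriv_line (hf : ContDiff ℝ n f) (hk : k < n)
    (x v : E) (s : ℝ) :
    HasDerivAt (fun t : ℝ ↦ iteratedFDeriv ℝ k f (x + t • v) fun _ ↦ v)
      (iteratedFDeriv ℝ (k + 1) f (x + s • v) fun _ ↦ v) s := by
  have hline : HasDerivAt (fun t : ℝ ↦ x + t • v) v s := by
    simpa using ((hasDerivAt_id s).smul_const v).const_add x
  have hcomp : HasDerivAt (fun t : ℝ ↦ iteratedFDeriv ℝ k f (x + t • v))
      (fderiv ℝ (iteratedFDeriv ℝ k f) (x + s • v) v) s :=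
    (hf.differentiable_iteratedFDeriv hk (x + s • v)).hasFDerivAt.comp_hasDerivAt s hline
  rw [iteratedFDeriv_succ_apply_left]
  exact (ContinuousMultilinearMap.apply ℝ (fun _ : Fin k ↦ E) F fun _ ↦ v).hasFDerivAt
    |>.comp_hasDerivAt s hcomp

theorem ContDiff.continuous_iteratedFDeriv_line (hf : ContDiff ℝ n f) (hk : k ≤ n) (x v : E) :
    Continuous fun t : ℝ ↦ iteratedFDeriv ℝ k f (x + t • v) fun _ ↦ v := by
  have := hf.continuous_iteratedFDeriv hk
  fun_prop

end Line

/-- Box-rule representation with exact third-order remainder: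
for a `C³` functional `L : Y → ℝ` on a real normed space `Y` and any `y₁, y₂ ∈ Y`,
with `e := y₁ − y₂`,
`L(y₁) − L(y₂) = (1/2)(L'(y₂)(e) + L'(y₁)(e))
  + (1/2) ∫₀¹ L'''(y₂ + s e)(e,e,e) · s(s−1) ds`. -/
theorem box_rule_representation
    {Y : Type*} [NormedAddCommGroup Y] [NormedSpace ℝ Y]
    (L : Y → ℝ) (hL : ContDiff ℝ 3 L) (y₁ y₂ : Y) :
    L y₁ - L y₂ =
      (1/2) * ((fderiv ℝ L y₂) (y₁ - y₂) + (fderiv ℝ L y₁) (y₁ - y₂)) +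
      (1/2) * ∫ s in (0:ℝ)..1,
        (iteratedFDeriv ℝ 3 L (y₂ + s • (y₁ - y₂)))
          ![y₁ - y₂, y₁ - y₂, y₁ - y₂] * s * (s - 1) := by
  have hvec : (![y₁ - y₂, y₁ - y₂, y₁ - y₂] : Fin 3 → Y) = fun _ ↦ y₁ - y₂ := by
    ext i; fin_cases i <;> rfl
  have key := sub_eq_trapezoid_add_integral_smul_third_deriv (a := 0) (b := 1)
    (fun s _ ↦ hL.hasDerivAt_iteratedFDeriv_line (k := 0) (by norm_num) y₂ (y₁ - y₂) s)
    (fun s _ ↦ hL.hasDerivAt_iteratedFDeriv_line (k := 1) (by norm_num) y₂ (y₁ - y₂) s)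
    (fun s _ ↦ hL.hasDerivAt_iteratedFDeriv_line (k := 2) (by norm_num) y₂ (y₁ - y₂) s)
    ((hL.continuous_iteratedFDeriv_line (k := 3) le_rfl y₂ (y₁ - y₂)).intervalIntegrable 0 1)
  simp only [Nat.reduceAdd, iteratedFDeriv_zero_apply, iteratedFDeriv_one_apply, zero_smul,
    one_smul, add_zero, add_sub_cancel, sub_zero, smul_eq_mul] at key
  rw [key, hvec]
  congr 2
  refine intervalIntegral.integral_congr fun s _ ↦ ?_
  ring
end

section
/- (Abstract error representation, Lemma 3.1.) Let Y be a real normed vector space and let L, L̃ : Y → ℝ be three times continuously (Fréchet) differentiable functionals. Let Y₁ ⊆ Y and Y₂ ⊆ Y be linear subspaces. Suppose y₁ ∈ Y₁ is a stationary point of L on Y₁, i.e. L'(y₁)(δy₁) = 0 for all δy₁ ∈ Y₁, and y₂ ∈ Y₂ is a stationary point of L̃ on Y₂, i.e. L̃'(y₂)(δy₂) = 0 for all δy₂ ∈ Y₂. Assume additionally the compatibility condition L'(y₁)(y₂) = 0. Then for every ỹ₂ ∈ Y₂ one has the error representation L(y₁) − L̃(y₂) = (1/2)·L'(y₂)(y₁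 − ỹ₂) + (1/2)·(L − L̃)'(y₂)(ỹ₂ − y₂) + (L − L̃)(y₂) + ℛ, where, with e := y₁ − y₂, the remainder is ℛ = (1/2) ∫₀¹ L'''(y₂ + s·e)(e,e,e)·s·(s−1) ds. -/
/-!
Put `e = y₁ - y₂` and `f s = L (y₂ + s • e)`. Integrating `f'''` twice by parts against the
kernel `s (s - 1)` gives the error of the trapezoidal rule,
`f 1 - f 0 = (f' 0 + f' 1) / 2 + ½ ∫₀¹ f''' s · s (s - 1)`.
Here `f' 1 = L'(y₁)(y₁ - y₂)` vanishes by stationarity of `y₁` and the compatibility condition,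
`L̃'(y₂)(ỹ₂ - y₂)` vanishes by stationarity of `y₂`, and `f' 0 = L'(y₂) e` splits along
`e = (y₁ - ỹ₂) + (ỹ₂ - y₂)`.
-/

open intervalIntegral Set

theorem iteratedDeriv_comp_add_smul {𝕜 E F : Type*} [NontriviallyNormedField 𝕜]
    [NormedAddCommGroup E] [NormedSpace 𝕜 E] [NormedAddCommGroup F] [NormedSpace 𝕜 F]
    {f : E → F} {n : WithTop ℕ∞} (hf : ContDiff 𝕜 n f) {i : ℕ} (hi : i ≤ n) (x v : E) (t : 𝕜) :
    iteratedDeriv i (fun s : 𝕜 => f (x + s • v)) t =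
      iteratedFDeriv 𝕜 i f (x + t • v) fun _ => v := by
  have hshift : ContDiff 𝕜 n fun z => f (x + z) := hf.comp (contDiff_const.add contDiff_id)
  change iteratedFDeriv 𝕜 i ((fun z => f (x + z)) ∘ ContinuousLinearMap.toSpanSingleton 𝕜 v) t _
    = _
  rw [(ContinuousLinearMap.toSpanSingleton 𝕜 v).iteratedFDeriv_comp_right hshift t hi]
  simp [iteratedFDeriv_comp_add_left]

theorem ContDiff.hasDerivAt_iteratedDeriv {𝕜 F : Type*} [NontriviallyNormedField 𝕜]
    [NormedAddCommGroup F] [NormedSpace 𝕜 F] {f : 𝕜 → F} {n : WithTop ℕ∞}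
    (hf : ContDiff 𝕜 n f) {k : ℕ} (hk : k < n) (x : 𝕜) :
    HasDerivAt (iteratedDeriv k f) (iteratedDeriv (k + 1) f x) x := by
  rw [iteratedDeriv_succ]
  exact (hf.differentiable_iteratedDeriv k hk x).hasDerivAt

theorem sub_eq_trapezoid_add_integral {f f' f'' f''' : ℝ → ℝ} {a b : ℝ}
    (hf : ∀ x ∈ uIcc a b, HasDerivAt f (f' x) x)
    (hf' : ∀ x ∈ uIcc a b, HasDerivAt f' (f'' x) x)
    (hf'' : ∀ x ∈ uIcc a b, HasDerivAt f'' (f''' x) x)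
    (hf''' : IntervalIntegrable f''' MeasureTheory.volume a b) :
    f b - f a = (b - a) / 2 * (f' a + f' b) +
      1 / 2 * ∫ x in a..b, f''' x * (x - a) * (x - b) := by
  have hint' : IntervalIntegrable f' MeasureTheory.volume a b :=
    ContinuousOn.intervalIntegrable fun x hx => (hf' x hx).continuousAt.continuousWithinAt
  have hint'' : IntervalIntegrable f'' MeasureTheory.volume a b :=
    ContinuousOn.intervalIntegrable fun x hx => (hf'' x hx).continuousAt.continuousWithinAt
  have hkernel : ∀ x ∈ uIcc a b, HasDerivAt (fun x => (x - a) * (x - b)) (2 * x - a - b) x :=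
    fun x _ => (((hasDerivAt_id' x).sub_const a).mul ((hasDerivAt_id' x).sub_const b)).congr_deriv
      (by ring)
  have hkernel' : ∀ x ∈ uIcc a b, HasDerivAt (fun x => 2 * x - a - b) 2 x := fun x _ => by
    simpa using (((hasDerivAt_id x).const_mul 2).sub_const a).sub_const b
  have ibp₁ := integral_mul_deriv_eq_deriv_mul hkernel hf''
    ((by fun_prop : Continuous fun x : ℝ => 2 * x - a - b).intervalIntegrable a b) hf'''
  have ibp₂ := integral_mul_deriv_eq_deriv_mul hkernel' hf' intervalIntegrable_const hint''
  have ftc := integral_eq_sub_of_hasDerivAt hf hint'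
  have hcomm : (∫ x in a..b, f''' x * (x - a) * (x - b)) =
      ∫ x in a..b, (x - a) * (x - b) * f''' x := by
    congr 1; ext x; ring
  rw [hcomm, ibp₁, ibp₂, integral_const_mul, ftc]
  ring

theorem ContDiff.sub_eq_trapezoid_add_integral {f : ℝ → ℝ} (hf : ContDiff ℝ 3 f) (a b : ℝ) :
    f b - f a = (b - a) / 2 * (iteratedDeriv 1 f a + iteratedDeriv 1 f b) +
      1 / 2 * ∫ x in a..b, iteratedDeriv 3 f x * (x - a) * (x - b) := by
  refine _root_.sub_eq_trapezoid_add_integral (f'' := iteratedDeriv 2 f)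
    (fun x _ => ?_) (fun x _ => ?_) (fun x _ => ?_)
    ((hf.continuous_iteratedDeriv 3 le_rfl).intervalIntegrable a b)
  · simpa using hf.hasDerivAt_iteratedDeriv (k := 0) (by norm_num) x
  · exact hf.hasDerivAt_iteratedDeriv (k := 1) (by norm_num) x
  · exact hf.hasDerivAt_iteratedDeriv (k := 2) (by norm_num) x

theorem abstract_error_representation_general
    {Y : Type*} [NormedAddCommGroup Y] [NormedSpace ℝ Y]
    (L Ltil : Y → ℝ) (hL : ContDiff ℝ 3 L)
    (Y₁ Y₂ : Submodule ℝ Y)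
    (y₁ : Y) (hy₁ : y₁ ∈ Y₁)
    (y₂ : Y) (hy₂ : y₂ ∈ Y₂)
    (hstat₁ : ∀ δ ∈ Y₁, (fderiv ℝ L y₁) δ = 0)
    (hstat₂ : ∀ δ ∈ Y₂, (fderiv ℝ Ltil y₂) δ = 0)
    (hcompat : (fderiv ℝ L y₁) y₂ = 0) :
    ∀ ytil₂ ∈ Y₂,
      L y₁ - Ltil y₂ =
        (1/2) * (fderiv ℝ L y₂) (y₁ - ytil₂) +
        (1/2) * ((fderiv ℝ L y₂) (ytil₂ - y₂) - (fderiv ℝ Ltil y₂) (ytil₂ - y₂)) +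
        (L y₂ - Ltil y₂) +
        (1/2) * ∫ s in (0:ℝ)..1,
          (iteratedFDeriv ℝ 3 L (y₂ + s • (y₁ - y₂)))
            ![y₁ - y₂, y₁ - y₂, y₁ - y₂] * s * (s - 1) := by
  intro ytil₂ hytil₂
  set e := y₁ - y₂
  have hline (i : ℕ) (hi : i ≤ 3) (t : ℝ) :
      iteratedDeriv i (fun s : ℝ => L (y₂ + s • e)) t =
        iteratedFDeriv ℝ i L (y₂ + t • e) fun _ => e :=
    iteratedDeriv_comp_add_smul hL (mod_cast hi) y₂ e t
  have hf : ContDiff ℝ 3 fun s : ℝ => L (y₂ + s • e) := hL.comp (by fun_prop)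
  have htrap := hf.sub_eq_trapezoid_add_integral 0 1
  have hshift : y₂ + e = y₁ := add_sub_cancel y₂ y₁
  simp only [hline 1 (by norm_num), hline 3 (by norm_num),
    iteratedFDeriv_one_apply, zero_smul, one_smul, add_zero, hshift, sub_zero] at htrap
  have hvec : (![e, e, e] : Fin 3 → Y) = fun _ => e := by ext i; fin_cases i <;> rfl
  have hend : fderiv ℝ L y₁ e = 0 := by rw [map_sub, hstat₁ y₁ hy₁, hcompat, sub_zero]
  have hsplit : fderiv ℝ L y₂ e = fderiv ℝ L y₂ (y₁ - ytil₂) + fderiv ℝ L y₂ (ytil₂ - y₂) := by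
    rw [← map_add, sub_add_sub_cancel]
  rw [hvec, hstat₂ _ (Y₂.sub_mem hytil₂ hy₂)]
  linarith

/-- Abstract DWR error representation (Lemma 3.1):
for `C³` functionals `L, L̃ : Y → ℝ`, subspaces `Y₁, Y₂ ⊆ Y`,
a stationary point `y₁ ∈ Y₁` of `L` on `Y₁`, a stationary point `y₂ ∈ Y₂` of `L̃`
on `Y₂`, assuming the compatibility condition `L'(y₁)(y₂) = 0`, one has for every
`ỹ₂ ∈ Y₂`, with `e := y₁ − y₂`,
`L(y₁) − L̃(y₂) = (1/2) L'(y₂)(y₁ − ỹ₂) + (1/2)(L − L̃)'(y₂)(ỹ₂ − y₂)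
  + (L − L̃)(y₂) + (1/2) ∫₀¹ L'''(y₂ + s e)(e,e,e) · s(s−1) ds`. -/
theorem abstract_error_representation
    {Y : Type*} [NormedAddCommGroup Y] [NormedSpace ℝ Y]
    (L Ltil : Y → ℝ) (hL : ContDiff ℝ 3 L) (hLtil : ContDiff ℝ 3 Ltil)
    (Y₁ Y₂ : Submodule ℝ Y)
    (y₁ : Y) (hy₁ : y₁ ∈ Y₁)
    (y₂ : Y) (hy₂ : y₂ ∈ Y₂)
    (hstat₁ : ∀ δ ∈ Y₁, (fderiv ℝ L y₁) δ = 0)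
    (hstat₂ : ∀ δ ∈ Y₂, (fderiv ℝ Ltil y₂) δ = 0)
    (hcompat : (fderiv ℝ L y₁) y₂ = 0) :
    ∀ ytil₂ ∈ Y₂,
      L y₁ - Ltil y₂ =
        (1/2) * (fderiv ℝ L y₂) (y₁ - ytil₂) +
        (1/2) * ((fderiv ℝ L y₂) (ytil₂ - y₂) - (fderiv ℝ Ltil y₂) (ytil₂ - y₂)) +
        (L y₂ - Ltil y₂) +
        (1/2) * ∫ s in (0:ℝ)..1,
          (iteratedFDeriv ℝ 3 L (y₂ + s • (y₁ - y₂)))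
            ![y₁ - y₂, y₁ - y₂, y₁ - y₂] * s * (s - 1) :=
  abstract_error_representation_general L Ltil hL Y₁ Y₂ y₁ hy₁ y₂ hy₂ hstat₁ hstat₂ hcompat
end

section
/- (Nested-subspace case of the abstract error representation.) Let Y be a real normed vector space and L : Y → ℝ a three times continuously (Fréchet) differentiable functional. Let Y₂ ⊆ Y₁ ⊆ Y be linear subspaces. Suppose y₁ ∈ Y₁ satisfies L'(y₁)(δy₁) = 0 for all δy₁ ∈ Y₁, and y₂ ∈ Y₂ satisfies L'(y₂)(δy₂) = 0 for all δy₂ ∈ Y₂. Then for every ỹ₂ ∈ Y₂ one has L(y₁) − L(y₂) = (1/2)·L'(y₂)(y₁ − ỹ₂) + ℛ, where, with e := y₁ − y₂, the remainder is ℛ = (1/2) ∫₀¹ L'''(y₂ + s·e)(e,e,e)·s·(s−1) ds. -/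
/-!
Along the segment `s ↦ y₂ + s • e` the scalar function `g s = L (y₂ + s • e)` has derivatives
`g⁽ᵏ⁾ s = L⁽ᵏ⁾(y₂ + s • e)(e, …, e)`. Integrating `s (s - 1) g'''` by parts twice gives the
trapezoidal rule with its error term, `g 1 - g 0 = (g' 0 + g' 1) / 2 + ½ ∫₀¹ g''' s · s (s - 1)`.
Here `g' 1 = L'(y₁) e = 0` because `e ∈ Y₁`, and `g' 0 = L'(y₂) e = L'(y₂)(y₁ - ỹ₂)` because
`ỹ₂ - y₂ ∈ Y₂` (Galerkin orthogonality).
-/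

open intervalIntegral

theorem hasDerivAt_iteratedFDeriv_apply_line
    {E F : Type*} [NormedAddCommGroup E] [NormedSpace ℝ E]
    [NormedAddCommGroup F] [NormedSpace ℝ F]
    {n : WithTop ℕ∞} {f : E → F} (hf : ContDiff ℝ n f) {k : ℕ} (hk : (k : WithTop ℕ∞) < n)
    (x v : E) (t : ℝ) :
    HasDerivAt (fun s : ℝ => iteratedFDeriv ℝ k f (x + s • v) (fun _ => v))
      (iteratedFDeriv ℝ (k + 1) f (x + t • v) (fun _ => v)) t := by
  have hline : HasDerivAt (fun s : ℝ => x + s • v) v t := by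
    simpa using ((hasDerivAt_id t).smul_const v).const_add x
  have hcomp := ((hf.differentiable_iteratedFDeriv hk) _).hasFDerivAt.comp_hasDerivAt t hline
  rw [iteratedFDeriv_succ_apply_left]
  exact (ContinuousMultilinearMap.apply ℝ (fun _ : Fin k => E) F
    (fun _ => v)).hasFDerivAt.comp_hasDerivAt t hcomp

theorem sub_eq_trapezoid_add_integral_s3 {g g₁ g₂ g₃ : ℝ → ℝ}
    (hg : ∀ s, HasDerivAt g (g₁ s) s) (hg₁ : ∀ s, HasDerivAt g₁ (g₂ s) s)
    (hg₂ : ∀ s, HasDerivAt g₂ (g₃ s) s) (hg₃ : Continuous g₃) :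
    g 1 - g 0 = (1/2) * (g₁ 0 + g₁ 1) + (1/2) * ∫ s in (0:ℝ)..1, g₃ s * s * (s - 1) := by
  have hc₁ : Continuous g₁ := continuous_iff_continuousAt.2 fun s => (hg₁ s).continuousAt
  have hc₂ : Continuous g₂ := continuous_iff_continuousAt.2 fun s => (hg₂ s).continuousAt
  have hftc : ∫ s in (0:ℝ)..1, g₁ s = g 1 - g 0 :=
    integral_eq_sub_of_hasDerivAt (fun s _ => hg s) (hc₁.intervalIntegrable 0 1)
  have ibp₃ : ∫ s in (0:ℝ)..1, (s ^ 2 - s) * g₃ s = - ∫ s in (0:ℝ)..1, (2 * s - 1) * g₂ s := by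
    have hpoly : ∀ s : ℝ, HasDerivAt (fun s : ℝ => s ^ 2 - s) (2 * s - 1) s := fun s => by
      simpa using (hasDerivAt_pow 2 s).fun_sub (hasDerivAt_id' s)
    simpa using integral_mul_deriv_eq_deriv_mul (fun s _ => hpoly s) (fun s _ => hg₂ s)
      (Continuous.intervalIntegrable (by fun_prop) 0 1) (hg₃.intervalIntegrable 0 1)
  have ibp₂ : ∫ s in (0:ℝ)..1, (2 * s - 1) * g₂ s =
      g₁ 1 + g₁ 0 - 2 * ∫ s in (0:ℝ)..1, g₁ s := by
    have hlin : ∀ s : ℝ, HasDerivAt (fun s : ℝ => 2 * s - 1) 2 s := fun s => by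
      simpa using ((hasDerivAt_id s).const_mul 2).sub_const 1
    rw [integral_mul_deriv_eq_deriv_mul (fun s _ => hlin s) (fun s _ => hg₁ s)
      intervalIntegrable_const (hc₂.intervalIntegrable 0 1), integral_const_mul]
    ring
  have hshape : (fun s : ℝ => g₃ s * s * (s - 1)) = fun s => (s ^ 2 - s) * g₃ s := by
    funext s; ring
  rw [hshape, ibp₃, ibp₂, hftc]
  ring

/-- Nested-subspace case of the abstract DWR error representation:
for a `C³` functional `L : Y → ℝ` and subspaces `Y₂ ⊆ Y₁ ⊆ Y`,
if `y₁ ∈ Y₁` is stationary for `L` on `Y₁` and `y₂ ∈ Y₂` is stationary for `L`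
on `Y₂`, then for every `ỹ₂ ∈ Y₂`, with `e := y₁ − y₂`,
`L(y₁) − L(y₂) = (1/2) L'(y₂)(y₁ − ỹ₂)
  + (1/2) ∫₀¹ L'''(y₂ + s e)(e,e,e) · s(s−1) ds`. -/
theorem nested_error_representation
    {Y : Type*} [NormedAddCommGroup Y] [NormedSpace ℝ Y]
    (L : Y → ℝ) (hL : ContDiff ℝ 3 L)
    (Y₁ Y₂ : Submodule ℝ Y) (hsub : Y₂ ≤ Y₁)
    (y₁ : Y) (hy₁ : y₁ ∈ Y₁)
    (y₂ : Y) (hy₂ : y₂ ∈ Y₂)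
    (hstat₁ : ∀ δ ∈ Y₁, (fderiv ℝ L y₁) δ = 0)
    (hstat₂ : ∀ δ ∈ Y₂, (fderiv ℝ L y₂) δ = 0) :
    ∀ ytil₂ ∈ Y₂,
      L y₁ - L y₂ =
        (1/2) * (fderiv ℝ L y₂) (y₁ - ytil₂) +
        (1/2) * ∫ s in (0:ℝ)..1,
          (iteratedFDeriv ℝ 3 L (y₂ + s • (y₁ - y₂)))
            ![y₁ - y₂, y₁ - y₂, y₁ - y₂] * s * (s - 1) := by
  intro ytil₂ hytil₂
  set e := y₁ - y₂
  have hderiv (k : ℕ) (hk : k < 3) := hasDerivAt_iteratedFDeriv_apply_line hL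
    (by exact_mod_cast hk) y₂ e
  have hcont : Continuous fun s : ℝ => iteratedFDeriv ℝ 3 L (y₂ + s • e) (fun _ => e) := by
    have := hL.continuous_iteratedFDeriv (m := 3) le_rfl
    fun_prop
  have htrap := sub_eq_trapezoid_add_integral_s3 (hderiv 0 (by norm_num)) (hderiv 1 (by norm_num))
    (hderiv 2 (by norm_num)) hcont
  have hstat_y₁ : fderiv ℝ L y₁ e = 0 := hstat₁ e (Y₁.sub_mem hy₁ (hsub hy₂))
  have hgalerkin : fderiv ℝ L y₂ e = fderiv ℝ L y₂ (y₁ - ytil₂) := by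
    rw [← sub_eq_zero, ← map_sub, sub_sub_sub_cancel_left]
    exact hstat₂ _ (Y₂.sub_mem hytil₂ hy₂)
  have hvec : ![e, e, e] = fun _ => e := by
    funext i; fin_cases i <;> rfl
  have hend : y₂ + e = y₁ := add_sub_cancel y₂ y₁
  simp only [Nat.reduceAdd, iteratedFDeriv_zero_apply, iteratedFDeriv_one_apply, zero_smul,
    add_zero, one_smul, hend, hstat_y₁, hgalerkin] at htrap
  rw [hvec, htrap]
end
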